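/- arXiv:math/0611077 — 2 statements merged into one kernel-verified Lean document; each statement's English description precedes it below -/
import Mathlib

section
/- The defect of the lattice Vₙ (the form Lₙ on ℤ⁴ⁿ) satisfies ⌊n/3⌋ ≤ d(Vₙ) < n/2 for all n ≥ 1; in particular there is a characteristic vector of norm 4n − 8⌊n/3⌋, and every characteristic vector has positive norm since the form is odd. -/
noncomputable section

/-- `Λₙ = ℤ[x]/(xⁿ−1)`, realized as the group ring `ℤ[ℤ/n]`. -/
abbrev Lam (n : ℕ) := AddMonoidAlgebra ℤ (ZMod n)

/-- The monomial `x^d` in `Λₙ`. -/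
def Xp (n : ℕ) (d : ℤ) : Lam n := AddMonoidAlgebra.single ((d : ZMod n)) 1

/-- The element `t = x + x⁻¹` of `Λₙ`. -/
def tn (n : ℕ) : Lam n := Xp n 1 + Xp n (-1)

/-- The matrix `L` over `Λₙ`, obtained by substituting `t = x + x⁻¹`. -/
def Lmat (n : ℕ) : Matrix (Fin 4) (Fin 4) (Lam n) :=
  !![1 + tn n + tn n ^ 2, tn n + tn n ^ 2, 1 + tn n, tn n;
     tn n + tn n ^ 2, 1 + tn n + tn n ^ 2, tn n, 1 + tn n;
     1 + tn n, tn n, 2, 0;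
     tn n, 1 + tn n, 0, 2]

/-- The involution of `Λₙ` sending `x` to `x⁻¹`. -/
def conj (n : ℕ) (f : Lam n) : Lam n := AddMonoidAlgebra.ofCoeff (Finsupp.mapDomain (fun a => -a) f.coeff)

/-- The `Λₙ`-valued hermitian form on `Λₙ⁴` given by the matrix `L`. -/
def herm (n : ℕ) (v w : Fin 4 → Lam n) : Lam n :=
  ∑ i, ∑ j, conj n (v i) * Lmat n i j * w j

/-- The `ℤ`-valued symmetric bilinear form `Lₙ` on `Λₙ⁴ ≅ ℤ⁴ⁿ`:
the coefficient of the identity (`x⁰`) of the `Λₙ`-valued hermitian form. -/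
def Ln (n : ℕ) (v w : Fin 4 → Lam n) : ℤ := (herm n v w).coeff 0

/-- The norm element `N = 1 + x + ⋯ + xⁿ⁻¹` of `Λₙ`. -/
def Nn (n : ℕ) : Lam n := ∑ d ∈ Finset.range n, AddMonoidAlgebra.single ((d : ZMod n)) (1 : ℤ)

/-- The standard `Λₙ`-basis vectors `e₁, e₂, e₃, e₄` of `Λₙ⁴`. -/
def ee (n : ℕ) (i : Fin 4) : Fin 4 → Lam n := Pi.single i 1

/-- `w` is a characteristic vector for `Lₙ`. -/
def IsChar (n : ℕ) (w : Fin 4 → Lam n) : Prop :=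
  ∀ v : Fin 4 → Lam n, (2 : ℤ) ∣ Ln n w v - Ln n v v

/-!
Write `⟨f, g⟩ = ∑ₐ f(a) g(a)` for the coefficient pairing on `Λₙ = ℤ[ℤ/n]` and `ε` for the
augmentation. The pairing is the `x⁰`-coefficient of `f̄ g`, so `Lₙ(v, w) = ∑ᵢ ⟨vᵢ, (L w)ᵢ⟩`.
Since `L` is hermitian with diagonal `(1 + t + t², 1 + t + t², 2, 2)` and `⟨f, f⟩ ≡ ε f`,
`Lₙ(v, v)` is congruent mod 2 to the sum of `ε` of the first two coordinates of `v`. Pairing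
with `N` is `ε`, so `Lₙ(w₀, v)` has the same parity and `w₀` is characteristic; its norm is
`4n − 8⌊n/3⌋` because multiplication by `x^{±1}`, `x^{±2}` moves the support
`{0, 3, …, 3(⌊n/3⌋ − 1)}` of `1 + x³ + ⋯` off itself.

Positivity: `2 Lₙ(v, v)` is the sum of the squared norms of `(1 + t)v₁ + t v₂ + 2v₃`,
`t v₁ + (1 + t)v₂ + 2v₄`, `v₁` and `v₂`, so `Lₙ` is positive definite, and `0` is not
characteristic because `Lₙ(e₁, e₁)` is odd.
-/

namespace AddMonoidAlgebra

section CoeffDot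

variable {R G : Type*} [CommSemiring R] [Fintype G]

def coeffDot : AddMonoidAlgebra R G →ₗ[R] AddMonoidAlgebra R G →ₗ[R] R :=
  LinearMap.mk₂ R (fun f g => ∑ a, f.coeff a * g.coeff a)
    (fun _ _ _ => by simp [add_mul, Finset.sum_add_distrib])
    (fun _ _ _ => by simp [Finset.mul_sum, mul_assoc])
    (fun _ _ _ => by simp [mul_add, Finset.sum_add_distrib])
    (fun _ _ _ => by simp [Finset.mul_sum, mul_left_comm])

theorem coeffDot_apply (f g : AddMonoidAlgebra R G) :
    coeffDot f g = ∑ a, f.coeff a * g.coeff a := rfl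

theorem coeffDot_comm (f g : AddMonoidAlgebra R G) : coeffDot f g = coeffDot g f := by
  simp only [coeffDot_apply, mul_comm]

theorem coeffDot_single_single [DecidableEq G] (a b : G) (r s : R) :
    coeffDot (single a r) (single b s) = if a = b then r * s else 0 := by
  by_cases h : a = b
  · subst h; simp [coeffDot_apply, Finsupp.single_apply]
  · simp [coeffDot_apply, Finsupp.single_apply, h]

end CoeffDot

section Ordered

variable {R G : Type*} [CommRing R] [LinearOrder R] [IsStrictOrderedRing R] [Fintype G]

theorem coeffDot_self_nonneg (f : AddMonoidAlgebra R G) : 0 ≤ coeffDot f f :=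
  Finset.sum_nonneg fun _ _ => mul_self_nonneg _

theorem eq_zero_of_coeffDot_self_eq_zero {f : AddMonoidAlgebra R G} (h : coeffDot f f = 0) :
    f = 0 := by
  have := (Finset.sum_eq_zero_iff_of_nonneg fun a _ => mul_self_nonneg (f.coeff a)).1 h
  ext a
  exact mul_self_eq_zero.1 (this a (Finset.mem_univ a))

end Ordered

section Augmentation

variable {R G : Type*} [CommSemiring R] [AddMonoid G]

def augmentation : AddMonoidAlgebra R G →+* R := (lift R R G 1).toRingHom

theorem augmentation_single (a : G) (r : R) : augmentation (single a r) = r := by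
  simp [augmentation, lift_single]

theorem augmentation_apply [Fintype G] (f : AddMonoidAlgebra R G) :
    augmentation f = ∑ a, f.coeff a := by
  simp [augmentation, lift_apply, Finsupp.sum_fintype]

theorem two_dvd_coeffDot_self_sub_augmentation [Fintype G] (f : AddMonoidAlgebra ℤ G) :
    2 ∣ coeffDot f f - augmentation f := by
  rw [coeffDot_apply, augmentation_apply, ← Finset.sum_sub_distrib]
  exact Finset.dvd_sum fun a _ => by
    simpa only [mul_sub_one] using (Int.even_mul_pred_self (f.coeff a)).two_dvd

end Augmentation

end AddMonoidAlgebra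

open AddMonoidAlgebra

section Lam

variable {n : ℕ}

def conjHom (n : ℕ) : Lam n →+* Lam n :=
  mapDomainRingHom ℤ (negAddMonoidHom : ZMod n →+ ZMod n)

theorem conjHom_apply (f : Lam n) : conjHom n f = conj n f := rfl

theorem conj_single (a : ZMod n) (r : ℤ) : conj n (single a r) = single (-a) r :=
  congrArg ofCoeff Finsupp.mapDomain_single

theorem Xp_mul_Xp (a b : ℤ) : Xp n a * Xp n b = Xp n (a + b) := by
  simp [Xp, single_mul_single]

theorem conj_Xp (d : ℤ) : conj n (Xp n d) = Xp n (-d) := by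
  simp [Xp, conj_single]

theorem conjHom_tn : conjHom n (tn n) = tn n := by
  simp only [tn, map_add, conjHom_apply, conj_Xp, neg_neg, add_comm]

theorem conj_tn : conj n (tn n) = tn n := conjHom_tn

theorem conj_one_add_tn : conj n (1 + tn n) = 1 + tn n := by
  simp [← conjHom_apply, conjHom_tn]

theorem conj_tn_add_tn_sq : conj n (tn n + tn n ^ 2) = tn n + tn n ^ 2 := by
  simp [← conjHom_apply, conjHom_tn]

theorem Xp_zero : Xp n 0 = 1 := by rw [Xp, Int.cast_zero, one_def]

theorem tn_sq : tn n ^ 2 = Xp n 2 + Xp n (-2) + 2 := by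
  rw [sq, tn, add_mul, mul_add, mul_add, Xp_mul_Xp, Xp_mul_Xp, Xp_mul_Xp, Xp_mul_Xp]
  norm_num [Xp_zero]
  ring

theorem augmentation_Xp (d : ℤ) : augmentation (Xp n d) = 1 := augmentation_single _ _

theorem augmentation_tn : augmentation (tn n) = 2 := by
  rw [tn, map_add, augmentation_Xp, augmentation_Xp]; rfl

def everyThird (n : ℕ) : Lam n := ∑ j ∈ Finset.range (n / 3), Xp n (3 * j)

def w₀ (n : ℕ) : Fin 4 → Lam n := ![(-2 : ℤ) • everyThird n, 0, Nn n, Nn n]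

theorem augmentation_everyThird : augmentation (everyThird n) = ((n / 3 : ℕ) : ℤ) := by
  simp [everyThird, augmentation_Xp]

theorem intCast_three_mul_eq_iff {j k : ℕ} {d : ℤ} (hj : j < n / 3) (hk : k < n / 3)
    (hd : |d| ≤ 2) : ((3 * j : ℤ) : ZMod n) = ((d + 3 * k : ℤ) : ZMod n) ↔ j = k ∧ d = 0 := by
  rw [ZMod.intCast_eq_intCast_iff_dvd_sub]
  obtain ⟨hd₁, hd₂⟩ := abs_le.mp hd
  constructor
  · intro h
    have := Int.eq_zero_of_abs_lt_dvd h (abs_lt.mpr ⟨by omega, by omega⟩)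
    omega
  · rintro ⟨rfl, rfl⟩
    simp

end Lam

section Finite

variable {n : ℕ} [NeZero n]

theorem coeff_zero_conj_mul (f g : Lam n) : (conj n f * g).coeff 0 = coeffDot f g := by
  induction f using AddMonoidAlgebra.induction_linear with
  | zero => simp [← conjHom_apply]
  | add f f' hf hf' => rw [← conjHom_apply, map_add, add_mul, coeff_add, Finsupp.add_apply,
      conjHom_apply, conjHom_apply, hf, hf', map_add, LinearMap.add_apply]
  | single a r => simp [conj_single, coeffDot_apply, Finsupp.single_apply]

theorem coeffDot_mul_left (c f g : Lam n) :
    coeffDot (c * f) g = coeffDot f (conj n c * g) := by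
  simp only [← coeff_zero_conj_mul, ← conjHom_apply, map_mul]
  rw [mul_comm (conjHom n c), mul_assoc]

theorem coeffDot_mul_comm_of_conj_eq {c : Lam n} (hc : conj n c = c) (f g : Lam n) :
    coeffDot f (c * g) = coeffDot g (c * f) := by
  rw [coeffDot_comm, coeffDot_mul_left, hc]

theorem coeffDot_Xp_neg_mul_self (d : ℤ) (f : Lam n) :
    coeffDot f (Xp n (-d) * f) = coeffDot f (Xp n d * f) := by
  rw [coeffDot_comm, coeffDot_mul_left, conj_Xp, neg_neg]

theorem coeff_Nn (a : ZMod n) : (Nn n).coeff a = 1 := by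
  have : Nn n = ∑ b : ZMod n, single b 1 :=
    Finset.sum_nbij' (fun d => (d : ZMod n)) ZMod.val (fun _ _ => Finset.mem_univ _)
      (fun a _ => Finset.mem_range.mpr a.val_lt)
      (fun _ hd => ZMod.val_cast_of_lt (Finset.mem_range.mp hd))
      (fun a _ => ZMod.natCast_zmod_val a) (fun _ _ => rfl)
  simp [this, Finsupp.single_apply]

theorem coeffDot_Nn (g : Lam n) : coeffDot (Nn n) g = augmentation g := by
  simp [coeffDot_apply, augmentation_apply, coeff_Nn]

theorem augmentation_Nn : augmentation (Nn n) = n := by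
  simp [augmentation_apply, coeff_Nn, ZMod.card]

theorem coeffDot_mul_Nn {c : Lam n} (hc : conj n c = c) (f : Lam n) :
    coeffDot f (c * Nn n) = augmentation c * augmentation f := by
  rw [coeffDot_mul_comm_of_conj_eq hc, coeffDot_Nn, map_mul]

theorem Ln_apply (v w : Fin 4 → Lam n) :
    Ln n v w =
      coeffDot (v 0) ((1 + tn n + tn n ^ 2) * w 0 + (tn n + tn n ^ 2) * w 1
        + (1 + tn n) * w 2 + tn n * w 3)
      + coeffDot (v 1) ((tn n + tn n ^ 2) * w 0 + (1 + tn n + tn n ^ 2) * w 1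
        + tn n * w 2 + (1 + tn n) * w 3)
      + coeffDot (v 2) ((1 + tn n) * w 0 + tn n * w 1 + 2 * w 2)
      + coeffDot (v 3) (tn n * w 0 + (1 + tn n) * w 1 + 2 * w 3) := by
  simp only [Ln, herm, Fin.sum_univ_four, coeff_add, Finsupp.add_apply, mul_assoc,
    coeff_zero_conj_mul, map_add]
  simp [Lmat]

theorem two_dvd_coeffDot_diag_sub (f : Lam n) :
    2 ∣ coeffDot f ((1 + tn n + tn n ^ 2) * f) - augmentation f := by
  have hdiag : (1 + tn n + tn n ^ 2) * f
      = f + f + f + Xp n 1 * f + Xp n (-1) * f + Xp n 2 * f + Xp n (-2) * f := by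
    rw [tn_sq, tn]; ring
  have h1 := coeffDot_Xp_neg_mul_self 1 f
  have h2 := coeffDot_Xp_neg_mul_self 2 f
  have h0 := two_dvd_coeffDot_self_sub_augmentation f
  rw [hdiag]
  simp only [map_add]
  omega

theorem two_dvd_Ln_self_sub (v : Fin 4 → Lam n) :
    2 ∣ Ln n v v - (augmentation (v 0) + augmentation (v 1)) := by
  have s10 := coeffDot_mul_comm_of_conj_eq conj_tn_add_tn_sq (v 1) (v 0)
  have s20 := coeffDot_mul_comm_of_conj_eq conj_one_add_tn (v 2) (v 0)
  have s30 := coeffDot_mul_comm_of_conj_eq conj_tn (v 3) (v 0)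
  have s21 := coeffDot_mul_comm_of_conj_eq conj_tn (v 2) (v 1)
  have s31 := coeffDot_mul_comm_of_conj_eq conj_one_add_tn (v 3) (v 1)
  have d0 := two_dvd_coeffDot_diag_sub (v 0)
  have d1 := two_dvd_coeffDot_diag_sub (v 1)
  rw [Ln_apply]
  simp only [map_add, two_mul]
  omega

theorem coeffDot_everyThird_Xp_mul (d : ℤ) (hd : |d| ≤ 2) :
    coeffDot (everyThird n) (Xp n d * everyThird n) = if d = 0 then ((n / 3 : ℕ) : ℤ) else 0 := by
  have hXp : ∀ a b : ℤ, coeffDot (Xp n a) (Xp n b) = if (a : ZMod n) = b then 1 else 0 := by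
    intro a b
    simp [Xp, coeffDot_single_single]
  simp only [everyThird, Finset.mul_sum, Xp_mul_Xp, map_sum, LinearMap.sum_apply, hXp]
  rw [Finset.sum_congr rfl fun k hk => Finset.sum_congr rfl fun j hj => if_congr
    (intCast_three_mul_eq_iff (Finset.mem_range.mp hj) (Finset.mem_range.mp hk) hd) rfl rfl]
  by_cases h : d = 0 <;> simp [h, Finset.filter_true_of_mem fun _ hx => Finset.mem_range.mp hx]

theorem coeffDot_everyThird_diag :
    coeffDot (everyThird n) ((1 + tn n + tn n ^ 2) * everyThird n) = 3 * ((n / 3 : ℕ) : ℤ) := by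
  set s := everyThird n
  have hdiag : (1 + tn n + tn n ^ 2) * s = Xp n 0 * s + Xp n 0 * s + Xp n 0 * s
      + Xp n 1 * s + Xp n (-1) * s + Xp n 2 * s + Xp n (-2) * s := by
    rw [tn_sq, tn, Xp_zero]; ring
  rw [hdiag, map_add, map_add, map_add, map_add, map_add, map_add,
    coeffDot_everyThird_Xp_mul 0 (by norm_num), coeffDot_everyThird_Xp_mul 1 (by norm_num),
    coeffDot_everyThird_Xp_mul (-1) (by norm_num), coeffDot_everyThird_Xp_mul 2 (by norm_num),
    coeffDot_everyThird_Xp_mul (-2) (by norm_num)]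
  norm_num
  ring

theorem Ln_w₀_left (v : Fin 4 → Lam n) :
    Ln n (w₀ n) v = -2 * coeffDot (everyThird n) ((1 + tn n + tn n ^ 2) * v 0
        + (tn n + tn n ^ 2) * v 1 + (1 + tn n) * v 2 + tn n * v 3)
      + 5 * (augmentation (v 0) + augmentation (v 1))
      + 2 * (augmentation (v 2) + augmentation (v 3)) := by
  simp only [Ln_apply, w₀, Matrix.cons_val, coeffDot_Nn, map_zero, LinearMap.zero_apply,
    LinearMap.map_smul₂, smul_eq_mul, map_add, map_mul, map_one, map_ofNat, augmentation_tn]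
  ring

theorem isChar_w₀ : IsChar n (w₀ n) := by
  intro v
  have := Ln_w₀_left v
  have := two_dvd_Ln_self_sub v
  omega

theorem Ln_w₀_self : Ln n (w₀ n) (w₀ n) = 4 * n - 8 * (n / 3 : ℕ) := by
  rw [Ln_w₀_left]
  simp only [w₀, Matrix.cons_val, mul_zero, add_zero, mul_smul_comm, map_add, map_smul, smul_eq_mul,
    coeffDot_everyThird_diag, coeffDot_mul_Nn conj_tn, coeffDot_mul_Nn conj_one_add_tn, map_zero, map_zsmul,
    augmentation_everyThird, augmentation_Nn, augmentation_tn, map_one]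
  ring

theorem two_mul_Ln_self (v : Fin 4 → Lam n) :
    2 * Ln n v v =
      coeffDot ((1 + tn n) * v 0 + tn n * v 1 + 2 * v 2) ((1 + tn n) * v 0 + tn n * v 1 + 2 * v 2)
      + coeffDot (tn n * v 0 + (1 + tn n) * v 1 + 2 * v 3) (tn n * v 0 + (1 + tn n) * v 1 + 2 * v 3)
      + coeffDot (v 0) (v 0) + coeffDot (v 1) (v 1) := by
  simp only [← coeff_zero_conj_mul, ← Finsupp.add_apply, ← coeff_add, Ln, two_mul]
  congr 2
  simp only [herm, Fin.sum_univ_four, Lmat, ← conjHom_apply, map_add, map_mul, map_one, conjHom_tn]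
  simp only [Matrix.of_apply, Matrix.cons_val', Matrix.cons_val_zero, Matrix.cons_val_fin_one,
    Matrix.cons_val_one, Matrix.cons_val, mul_zero, zero_mul, add_zero]
  ring

theorem Ln_self_pos {v : Fin 4 → Lam n} (hv : v ≠ 0) : 0 < Ln n v v := by
  by_contra! hle
  have h := two_mul_Ln_self v
  have hA := coeffDot_self_nonneg ((1 + tn n) * v 0 + tn n * v 1 + 2 * v 2)
  have hB := coeffDot_self_nonneg (tn n * v 0 + (1 + tn n) * v 1 + 2 * v 3)
  have h0 := coeffDot_self_nonneg (v 0)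
  have h1 := coeffDot_self_nonneg (v 1)
  have hv0 := eq_zero_of_coeffDot_self_eq_zero (f := v 0) (by linarith)
  have hv1 := eq_zero_of_coeffDot_self_eq_zero (f := v 1) (by linarith)
  simp only [hv0, hv1, mul_zero, zero_add, two_mul, map_add, map_zero, LinearMap.add_apply] at h hA hB
  have hv2 := eq_zero_of_coeffDot_self_eq_zero (f := v 2) (by linarith)
  have hv3 := eq_zero_of_coeffDot_self_eq_zero (f := v 3) (by linarith)
  exact hv (funext fun i => by fin_cases i <;> assumption)

theorem IsChar.ne_zero {w : Fin 4 → Lam n} (hw : IsChar n w) : w ≠ 0 := by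
  rintro rfl
  have hchar := hw (ee n 0)
  have hodd := two_dvd_Ln_self_sub (ee n 0)
  have hzero : Ln n 0 (ee n 0) = 0 := by simp [Ln, herm, ← conjHom_apply]
  rw [ee, Pi.single_eq_same, Pi.single_eq_of_ne one_ne_zero, map_one, map_zero] at hodd
  rw [hzero, ee] at hchar
  omega

end Finite

/-- The defect of the lattice `Vₙ = (ℤ⁴ⁿ, Lₙ)` satisfies `⌊n/3⌋ ≤ d(Vₙ) < n/2`:
there is a characteristic vector of norm `4n − 8⌊n/3⌋`, every characteristic vector
has positive norm (the form is odd), and any minimal characteristic vector `w`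
satisfies `8⌊n/3⌋ ≤ 4n − |w|²` and `4n − |w|² < 4n`. -/
theorem stmt_12 (n : ℕ) (hn : 1 ≤ n) :
    (∃ w : Fin 4 → Lam n, IsChar n w ∧ Ln n w w = 4 * n - 8 * (n / 3 : ℕ)) ∧
    (∀ w : Fin 4 → Lam n, IsChar n w → 0 < Ln n w w) ∧
    (∀ w : Fin 4 → Lam n, IsChar n w → (∀ u, IsChar n u → Ln n w w ≤ Ln n u u) →
      8 * ((n / 3 : ℕ) : ℤ) ≤ 4 * n - Ln n w w ∧ 4 * (n : ℤ) - Ln n w w < 4 * n) := by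
  have : NeZero n := ⟨by omega⟩
  have hpos : ∀ w, IsChar n w → 0 < Ln n w w := fun w hw => Ln_self_pos hw.ne_zero
  refine ⟨⟨w₀ n, isChar_w₀, Ln_w₀_self⟩, hpos, fun w hw hmin => ⟨?_, ?_⟩⟩
  · linarith [hmin _ isChar_w₀, Ln_w₀_self (n := n)]
  · linarith [hpos w hw]

end
end

section
/- If the form Lₙ on ℤ⁴ⁿ splits as an orthogonal direct sum of a standard lattice I_k and another lattice, then k ≤ 4n − 8⌊n/3⌋. -/
open Matrix
noncomputable section

/-! `Lₙ` is positive semidefinite, since twice its hermitian form is a sum of four hermitian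
squares. With `N = 1 + x + ⋯ + xⁿ⁻¹` and `S = ∑_{j < ⌊n/3⌋} x³ʲ`, the vector `w = (-2S, 0, N, N)`
is characteristic, and `Lₙ(w, w) = 4n - 8⌊n/3⌋` because the exponents `3j` are pairwise at
distance at least `3` in `ℤ/n`. In a splitting `I_k ⊕ B` with `B` positive semidefinite, the
`I_k`-coordinates of a characteristic vector are odd, so its norm is at least `k`. -/

open AddMonoidAlgebra Finset

theorem card_le_dotProduct_self_of_ne_zero {k : ℕ} {a : Fin k → ℤ} (ha : ∀ i, a i ≠ 0) :
    (k : ℤ) ≤ a ⬝ᵥ a := by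
  have h : ∀ i, (1 : ℤ) ≤ a i * a i := fun i => by
    nlinarith [Int.one_le_abs (ha i), abs_mul_abs_self (a i)]
  calc (k : ℤ) = ∑ _i : Fin k, (1 : ℤ) := by simp
    _ ≤ a ⬝ᵥ a := sum_le_sum fun i _ => h i

theorem card_le_of_isCharacteristic {V : Type*} {k m : ℕ} (β : V → V → ℤ)
    (B : Matrix (Fin m) (Fin m) ℤ) (φ : V ≃ (Fin k → ℤ) × (Fin m → ℤ))
    (hφ : ∀ v w, β v w = (φ v).1 ⬝ᵥ (φ w).1 + (φ v).2 ⬝ᵥ B *ᵥ (φ w).2)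
    (hpos : ∀ v, 0 ≤ β v v) {c : V} (hc : ∀ v, 2 ∣ β c v - β v v) :
    (k : ℤ) ≤ β c c := by
  have hB : 0 ≤ (φ c).2 ⬝ᵥ B *ᵥ (φ c).2 := by
    simpa [hφ] using hpos (φ.symm (0, (φ c).2))
  have ha : ∀ i, (φ c).1 i ≠ 0 := fun i => by
    have h := hc (φ.symm (Pi.single i 1, 0))
    simp only [hφ, Equiv.apply_symm_apply, dotProduct_single, Pi.single_eq_same, mul_one,
      mulVec_zero, dotProduct_zero, add_zero] at h
    omega
  calc (k : ℤ) ≤ (φ c).1 ⬝ᵥ (φ c).1 := card_le_dotProduct_self_of_ne_zero ha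
    _ ≤ (φ c).1 ⬝ᵥ (φ c).1 + (φ c).2 ⬝ᵥ B *ᵥ (φ c).2 := le_add_of_nonneg_right hB
    _ = β c c := (hφ c c).symm

namespace Lam

def conjHom (n : ℕ) : Lam n →+* Lam n := mapDomainRingHom ℤ negAddMonoidHom

section Involution

variable {n : ℕ}

theorem coe_conjHom : ⇑(conjHom n) = conj n := rfl

theorem conj_add (f g : Lam n) : conj n (f + g) = conj n f + conj n g := map_add (conjHom n) f g

theorem conj_mul (f g : Lam n) : conj n (f * g) = conj n f * conj n g := map_mul (conjHom n) f g

theorem conj_neg (f : Lam n) : conj n (-f) = -conj n f := map_neg (conjHom n) f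

theorem conj_zero : conj n 0 = 0 := map_zero (conjHom n)

theorem conj_one : conj n 1 = 1 := map_one (conjHom n)

theorem conj_two : conj n 2 = 2 := map_ofNat (conjHom n) 2

theorem conj_single (a : ZMod n) (c : ℤ) : conj n (single a c) = single (-a) c :=
  mapDomain_single

theorem conj_Xp (d : ℤ) : conj n (Xp n d) = Xp n (-d) := by
  rw [Xp, conj_single, Xp, Int.cast_neg]

theorem conj_tn : conj n (tn n) = tn n := by
  rw [tn, conj_add, conj_Xp, conj_Xp, neg_neg, add_comm]

theorem conj_conj (f : Lam n) : conj n (conj n f) = f := by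
  induction f using induction_linear with
  | zero => rw [conj_zero, conj_zero]
  | add f g hf hg => rw [conj_add, conj_add, hf, hg]
  | single a c => rw [conj_single, conj_single, neg_neg]

theorem coeff_zero_conj_mul (f g : Lam n) :
    (conj n f * g).coeff 0 = f.coeff.sum fun a c => c * g.coeff a := by
  induction f using induction_linear with
  | zero => simp [conj_zero]
  | add f₁ f₂ h₁ h₂ =>
    rw [conj_add, add_mul, coeff_add, Finsupp.add_apply, h₁, h₂, coeff_add,
      Finsupp.sum_add_index' (fun _ => zero_mul _) fun _ _ _ => add_mul _ _ _]
  | single a c =>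
    rw [conj_single, coeff_single_mul_apply, coeff_single,
      Finsupp.sum_single_index (zero_mul _), neg_neg, add_zero]

theorem coeff_zero_conj (f : Lam n) : (conj n f).coeff 0 = f.coeff 0 := by
  have h := Finsupp.mapDomain_apply neg_injective f.coeff 0
  rwa [neg_zero] at h

theorem coeff_zero_conj_mul_self_nonneg (f : Lam n) : 0 ≤ (conj n f * f).coeff 0 := by
  rw [coeff_zero_conj_mul]
  exact sum_nonneg fun _ _ => mul_self_nonneg _

end Involution

def aug (n : ℕ) : Lam n →ₐ[ℤ] ℤ := lift ℤ ℤ (ZMod n) 1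

section Augmentation

variable {n : ℕ}

@[simp] theorem aug_single (a : ZMod n) (c : ℤ) : aug n (single a c) = c := by
  simp [aug, lift_single]

@[simp] theorem aug_Xp (d : ℤ) : aug n (Xp n d) = 1 := aug_single _ 1

@[simp] theorem aug_tn : aug n (tn n) = 2 := by simp [tn]

theorem aug_conj (f : Lam n) : aug n (conj n f) = aug n f := by
  induction f using induction_linear with
  | zero => rw [conj_zero]
  | add f g hf hg => rw [conj_add, map_add, map_add, hf, hg]
  | single a c => rw [conj_single, aug_single, aug_single]

theorem aug_eq_sum (f : Lam n) : aug n f = f.coeff.sum fun _ c => c := by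
  induction f using induction_linear with
  | zero => simp
  | add f g hf hg =>
    rw [map_add, hf, hg, coeff_add, Finsupp.sum_add_index' (fun _ => rfl) fun _ _ _ => rfl]
  | single a c => rw [aug_single, coeff_single, Finsupp.sum_single_index rfl]

theorem coeff_zero_conj_mul_self_modEq (f : Lam n) :
    (conj n f * f).coeff 0 ≡ aug n f [ZMOD 2] := by
  rw [coeff_zero_conj_mul, aug_eq_sum]
  refine Int.ModEq.sum fun a _ => ?_
  rw [Int.modEq_iff_dvd, show f.coeff a - f.coeff a * f.coeff a = -(f.coeff a * (f.coeff a - 1))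
    by ring, dvd_neg]
  exact (Int.even_mul_pred_self _).two_dvd

end Augmentation

section NormElement

variable {n : ℕ} [NeZero n]

theorem Nn_eq_sum_univ : Nn n = ∑ a : ZMod n, single a 1 :=
  sum_nbij' (↑) ZMod.val (fun _ _ => mem_univ _) (fun a _ => mem_range.2 a.val_lt)
    (fun _ hd => ZMod.val_cast_of_lt (mem_range.1 hd)) (fun a _ => ZMod.natCast_zmod_val a)
    fun _ _ => rfl

theorem Nn_mul (f : Lam n) : Nn n * f = aug n f • Nn n := by
  induction f using induction_linear with
  | zero => simp
  | add f g hf hg => rw [mul_add, hf, hg, map_add, add_smul]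
  | single a c =>
    simp only [Nn_eq_sum_univ, sum_mul, smul_sum, single_mul_single, one_mul,
      aug_single, AddMonoidAlgebra.smul_single, smul_eq_mul, mul_one]
    exact Fintype.sum_equiv (Equiv.addRight a) _ _ fun _ => rfl

theorem coeff_zero_Nn : (Nn n).coeff 0 = 1 := by
  simp [Nn_eq_sum_univ, coeff_sum, coeff_single, Finsupp.single_apply]

theorem coeff_zero_Nn_mul (f : Lam n) : (Nn n * f).coeff 0 = aug n f := by
  rw [Nn_mul, coeff_smul_apply, coeff_zero_Nn, smul_eq_mul, mul_one]

@[simp] theorem aug_Nn : aug n (Nn n) = n := by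
  simp [Nn_eq_sum_univ]

theorem conj_Nn : conj n (Nn n) = Nn n := by
  rw [Nn_eq_sum_univ, ← coe_conjHom, map_sum, coe_conjHom]
  simp only [conj_single]
  exact Fintype.sum_equiv (Equiv.neg _) _ _ fun _ => rfl

end NormElement

def Sn (n : ℕ) : Lam n := ∑ j ∈ range (n / 3), Xp n (3 * j)

section ThirdPowers

variable {n : ℕ}

theorem Xp_mul_Xp (a b : ℤ) : Xp n a * Xp n b = Xp n (a + b) := by
  rw [Xp, Xp, single_mul_single, one_mul, Xp, Int.cast_add]

theorem Xp_zero : Xp n 0 = 1 := by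
  rw [Xp, Int.cast_zero, one_def]

theorem tn_sq : tn n ^ 2 = Xp n 2 + 2 + Xp n (-2) := by
  rw [tn, add_sq, pow_two, pow_two, Xp_mul_Xp, Xp_mul_Xp, mul_assoc, Xp_mul_Xp]
  norm_num [Xp_zero]

@[simp] theorem aug_Sn : aug n (Sn n) = (n / 3 : ℕ) := by
  simp [Sn]

theorem coeff_zero_conj_Xp_mul (d : ℤ) (g : Lam n) :
    (conj n (Xp n d) * g).coeff 0 = g.coeff d := by
  rw [conj_Xp, Xp, coeff_single_mul_apply, one_mul, Int.cast_neg, neg_neg, add_zero]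

theorem coeff_zero_conj_Sn_mul (g : Lam n) :
    (conj n (Sn n) * g).coeff 0 = ∑ j ∈ range (n / 3), g.coeff ((3 * j : ℤ) : ZMod n) := by
  rw [Sn, ← coe_conjHom, map_sum, coe_conjHom, sum_mul, coeff_sum, Finsupp.finsetSum_apply]
  exact sum_congr rfl fun j _ => coeff_zero_conj_Xp_mul _ g

theorem intCast_three_mul_eq_iff {j j' : ℕ} (hj : j < n / 3) (hj' : j' < n / 3) {r : ℤ}
    (hr : |r| ≤ 2) : ((3 * j' : ℤ) : ZMod n) = ((3 * j - r : ℤ) : ZMod n) ↔ j' = j ∧ r = 0 := by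
  obtain ⟨hr₁, hr₂⟩ := abs_le.mp hr
  rw [ZMod.intCast_eq_intCast_iff_dvd_sub]
  constructor
  · intro h
    have := Int.eq_zero_of_abs_lt_dvd h (abs_lt.mpr ⟨by omega, by omega⟩)
    omega
  · rintro ⟨rfl, rfl⟩
    simp

theorem coeff_Sn_mul_Xp {j : ℕ} (hj : j < n / 3) {r : ℤ} (hr : |r| ≤ 2) :
    (Sn n * Xp n r).coeff ((3 * j : ℤ) : ZMod n) = if r = 0 then 1 else 0 := by
  have hterm : ∀ j' ∈ range (n / 3),
      (Xp n (3 * j')).coeff (((3 * j : ℤ) : ZMod n) + -(r : ZMod n))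
        = if j' = j ∧ r = 0 then 1 else 0 := fun j' hj' => by
    rw [Xp, coeff_single, Finsupp.single_apply, ← Int.cast_neg, ← Int.cast_add, ← sub_eq_add_neg]
    exact if_congr (intCast_three_mul_eq_iff hj (mem_range.1 hj') hr) rfl rfl
  rw [Xp, coeff_mul_single_apply, mul_one, Sn, coeff_sum, Finsupp.finsetSum_apply,
    sum_congr rfl hterm]
  by_cases hr0 : r = 0 <;> simp [hr0, hj]

theorem coeff_zero_conj_Sn_mul_Sn_mul :
    (conj n (Sn n) * (Sn n * (1 + tn n + tn n ^ 2))).coeff 0 = 3 * ((n / 3 : ℕ) : ℤ) := by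
  have hexp : Sn n * (1 + tn n + tn n ^ 2) = Sn n * Xp n 0 + Sn n * Xp n 0 + Sn n * Xp n 0
      + Sn n * Xp n 1 + Sn n * Xp n (-1) + Sn n * Xp n 2 + Sn n * Xp n (-2) := by
    rw [tn_sq, tn, Xp_zero]
    ring
  have hterm : ∀ j ∈ range (n / 3),
      (Sn n * (1 + tn n + tn n ^ 2)).coeff ((3 * j : ℤ) : ZMod n) = 3 := fun j hj => by
    simp only [hexp, coeff_add, Finsupp.add_apply]
    simp (disch := norm_num) only [coeff_Sn_mul_Xp (mem_range.1 hj)]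
    norm_num
  rw [coeff_zero_conj_Sn_mul, sum_congr rfl hterm, sum_const, card_range, nsmul_eq_mul, mul_comm]

end ThirdPowers

section Form

variable {n : ℕ}

theorem herm_eq (v w : Fin 4 → Lam n) : herm n v w =
    conj n (v 0) * (1 + tn n + tn n ^ 2) * w 0 + conj n (v 0) * (tn n + tn n ^ 2) * w 1
      + conj n (v 0) * (1 + tn n) * w 2 + conj n (v 0) * tn n * w 3
    + (conj n (v 1) * (tn n + tn n ^ 2) * w 0 + conj n (v 1) * (1 + tn n + tn n ^ 2) * w 1
      + conj n (v 1) * tn n * w 2 + conj n (v 1) * (1 + tn n) * w 3)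
    + (conj n (v 2) * (1 + tn n) * w 0 + conj n (v 2) * tn n * w 1 + conj n (v 2) * 2 * w 2)
    + (conj n (v 3) * tn n * w 0 + conj n (v 3) * (1 + tn n) * w 1 + conj n (v 3) * 2 * w 3) := by
  simp only [herm, Fin.sum_univ_four, Lmat, of_apply, cons_val', cons_val_zero, cons_val_one,
    cons_val_two, cons_val_three, head_cons, tail_cons, head_fin_const, empty_val',
    cons_val_fin_one, mul_zero, zero_mul, add_zero]

theorem herm_self_add_herm_self (v : Fin 4 → Lam n) :
    herm n v v + herm n v v =
      conj n ((1 + tn n) * v 0 + tn n * v 1 + 2 * v 2) * ((1 + tn n) * v 0 + tn n * v 1 + 2 * v 2)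
      + conj n (tn n * v 0 + (1 + tn n) * v 1 + 2 * v 3) * (tn n * v 0 + (1 + tn n) * v 1 + 2 * v 3)
      + conj n (v 0) * v 0 + conj n (v 1) * v 1 := by
  simp only [herm_eq, conj_add, conj_mul, conj_one, conj_tn, conj_two]
  ring

theorem Ln_self_nonneg (v : Fin 4 → Lam n) : 0 ≤ Ln n v v := by
  have h := congrArg (·.coeff 0) (herm_self_add_herm_self v)
  simp only [coeff_add, Finsupp.add_apply] at h
  rw [Ln]
  linarith [coeff_zero_conj_mul_self_nonneg ((1 + tn n) * v 0 + tn n * v 1 + 2 * v 2),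
    coeff_zero_conj_mul_self_nonneg (tn n * v 0 + (1 + tn n) * v 1 + 2 * v 3),
    coeff_zero_conj_mul_self_nonneg (v 0), coeff_zero_conj_mul_self_nonneg (v 1)]

/- The terms of `herm n v v` other than `|v₀|²` and `|v₁|²` pair up as `X + conj X`, whose
coefficient at `x⁰` is even; this gives the parity of `Lₙ(v, v)`. -/
theorem exists_herm_self_eq (v : Fin 4 → Lam n) :
    ∃ X, herm n v v = conj n (v 0) * v 0 + conj n (v 1) * v 1 + (X + conj n X) := by
  refine ⟨conj n (v 0) * v 0 * (1 + Xp n 1 + Xp n 2) + conj n (v 1) * v 1 * (1 + Xp n 1 + Xp n 2)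
    + conj n (v 2) * v 2 + conj n (v 3) * v 3 + conj n (v 0) * v 1 * (tn n + tn n ^ 2)
    + conj n (v 0) * v 2 * (1 + tn n) + conj n (v 0) * v 3 * tn n + conj n (v 1) * v 2 * tn n
    + conj n (v 1) * v 3 * (1 + tn n), ?_⟩
  rw [herm_eq, tn_sq]
  simp only [tn, conj_add, conj_mul, conj_one, conj_two, conj_Xp, conj_conj, neg_neg]
  ring

theorem Ln_self_modEq (v : Fin 4 → Lam n) : Ln n v v ≡ aug n (v 0 + v 1) [ZMOD 2] := by
  obtain ⟨X, hX⟩ := exists_herm_self_eq v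
  have h₀ := coeff_zero_conj_mul_self_modEq (v 0)
  have h₁ := coeff_zero_conj_mul_self_modEq (v 1)
  simp only [Ln, hX, coeff_add, Finsupp.add_apply, coeff_zero_conj, map_add]
  unfold Int.ModEq at *
  omega

def charVec (n : ℕ) : Fin 4 → Lam n := ![-(2 * Sn n), 0, Nn n, Nn n]

variable [NeZero n]

theorem exists_herm_charVec_eq (v : Fin 4 → Lam n) :
    ∃ Z, herm n (charVec n) v = Nn n * (v 0 + v 1) + (Z + Z) := by
  refine ⟨Nn n * (tn n * (v 0 + v 1) + v 2 + v 3) - conj n (Sn n) * ((1 + tn n + tn n ^ 2) * v 0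
    + (tn n + tn n ^ 2) * v 1 + (1 + tn n) * v 2 + tn n * v 3), ?_⟩
  simp only [herm_eq, charVec, cons_val_zero, cons_val_one, cons_val_two, cons_val_three,
    head_cons, tail_cons, conj_neg, conj_mul, conj_two, conj_zero, conj_Nn]
  ring

theorem Ln_charVec_modEq (v : Fin 4 → Lam n) :
    Ln n (charVec n) v ≡ aug n (v 0 + v 1) [ZMOD 2] := by
  obtain ⟨Z, hZ⟩ := exists_herm_charVec_eq v
  simp only [Ln, hZ, coeff_add, Finsupp.add_apply, coeff_zero_Nn_mul]
  unfold Int.ModEq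
  omega

theorem isChar_charVec : IsChar n (charVec n) := fun v =>
  ((Ln_self_modEq v).trans (Ln_charVec_modEq v).symm).dvd

theorem herm_charVec_self : herm n (charVec n) (charVec n) =
    4 • (conj n (Sn n) * (Sn n * (1 + tn n + tn n ^ 2)))
      + Nn n * (4 * Nn n - 2 * (1 + 2 * tn n) * (conj n (Sn n) + Sn n)) := by
  simp only [herm_eq, charVec, cons_val_zero, cons_val_one, cons_val_two, cons_val_three,
    head_cons, tail_cons, conj_neg, conj_mul, conj_two, conj_zero, conj_Nn]
  ring

theorem Ln_charVec_self : Ln n (charVec n) (charVec n) = 4 * n - 8 * (n / 3 : ℕ) := by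
  have haug : aug n (4 * Nn n - 2 * (1 + 2 * tn n) * (conj n (Sn n) + Sn n))
      = 4 * n - 20 * (n / 3 : ℕ) := by
    simp only [map_sub, map_mul, map_add, map_ofNat, map_one, aug_Nn, aug_tn, aug_conj, aug_Sn]
    ring
  rw [Ln, herm_charVec_self, coeff_add, Finsupp.add_apply, coeff_smul_apply,
    coeff_zero_conj_Sn_mul_Sn_mul, coeff_zero_Nn_mul, haug, nsmul_eq_mul, Nat.cast_ofNat]
  ring

end Form

end Lam

theorem stmt_13_general (n : ℕ) (hn : 1 ≤ n) (k m : ℕ)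
    (B : Matrix (Fin m) (Fin m) ℤ)
    (φ : (Fin 4 → Lam n) ≃ₗ[ℤ] (Fin k → ℤ) × (Fin m → ℤ))
    (hφ : ∀ v w : Fin 4 → Lam n,
      Ln n v w = dotProduct (φ v).1 (φ w).1
        + dotProduct (φ v).2 (B.mulVec (φ w).2)) :
    k ≤ 4 * n - 8 * (n / 3) := by
  have : NeZero n := ⟨by omega⟩
  have h := card_le_of_isCharacteristic (Ln n) B φ.toEquiv hφ Lam.Ln_self_nonneg
    Lam.isChar_charVec
  rw [Lam.Ln_charVec_self] at h
  omega

/-- If the form `Lₙ` on `ℤ⁴ⁿ` splits as an orthogonal direct sum of a standard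
lattice `I_k` and another lattice, then `k ≤ 4n − 8⌊n/3⌋`. -/
theorem stmt_13 (n : ℕ) (hn : 1 ≤ n) (k m : ℕ)
    (B : Matrix (Fin m) (Fin m) ℤ) (hBs : Bᵀ = B)
    (φ : (Fin 4 → Lam n) ≃ₗ[ℤ] (Fin k → ℤ) × (Fin m → ℤ))
    (hφ : ∀ v w : Fin 4 → Lam n,
      Ln n v w = dotProduct (φ v).1 (φ w).1
        + dotProduct (φ v).2 (B.mulVec (φ w).2)) :
    k ≤ 4 * n - 8 * (n / 3) :=
  stmt_13_general n hn k m B φ hφ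

end
end
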